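/- For every nonzero v ∈ V with weight components v = Σ_{α ∈ R(v)} v_α and every X ∈ 𝔞, the moment map of exp(π(X))v is the weighted average m_𝔞(exp(π(X))v) = (Σ_{α ∈ R(v)} e^{2⟨X,α⟩}‖v_α‖² α) / (Σ_{α ∈ R(v)} e^{2⟨X,α⟩}‖v_α‖²). In particular, m_𝔞(exp(π(X))v) lies in the intrinsic interior of the convex hull of R(v). -/

import Mathlib

open scoped InnerProductSpace
open Finset
open scoped Classical

/-- The (restricted) moment map of a linear family of operators `π` on an inner
product space `V`: `m v` is the unique element of `E` with
`⟪m v, X⟫ = ⟪π X v, v⟫ / ‖v‖²` for all `X`. -/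
noncomputable def momentMap {E V : Type*} [NormedAddCommGroup E] [InnerProductSpace ℝ E]
    [FiniteDimensional ℝ E] [NormedAddCommGroup V] [InnerProductSpace ℝ V]
    (π : E →ₗ[ℝ] V →L[ℝ] V) (v : V) : E :=
  (InnerProductSpace.toDual ℝ E).symm <| LinearMap.toContinuousLinearMap
    { toFun := fun X => ⟪(π X) v, v⟫_ℝ / ‖v‖ ^ 2
      map_add' := fun X Y => by
        simp [map_add, ContinuousLinearMap.add_apply, inner_add_left, add_div]
      map_smul' := fun c X => by
        simp [map_smul, ContinuousLinearMap.smul_apply, inner_smul_left, mul_div_assoc] }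

/-! Weight vectors with distinct weights are orthogonal: `π (α - β)` is self-adjoint and acts on
`V_α` and `V_β` by scalars differing by `‖α - β‖²`. Hence for `v = ∑ v_α` one gets
`⟪π Y v, v⟫ = ∑ ⟪α, Y⟫ ‖v_α‖²`, i.e. `m(v)` is the centre of mass of `R(v)` with masses `‖v_α‖²`.
Since `exp (π X)` multiplies `v_α` by `e^⟪α, X⟫`, it only changes these masses, and a centre of
mass with positive masses lies in the intrinsic interior of the convex hull. -/

theorem ContinuousLinearMap.exp_apply_of_apply_eq_smul {E : Type*} [NormedAddCommGroup E]
    [NormedSpace ℝ E] [CompleteSpace E] {A : E →L[ℝ] E} {t : ℝ} {x : E} (h : A x = t • x) :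
    NormedSpace.exp A x = Real.exp t • x := by
  have hpow : ∀ n : ℕ, (A ^ n) x = t ^ n • x := fun n => by
    induction n with
    | zero => simp
    | succ n ih => rw [pow_succ', mul_apply_eq_comp, ih, map_smul, h, smul_smul, pow_succ]
  have hA := (NormedSpace.exp_series_hasSum_exp' (𝕂 := ℝ) A).mapL (apply ℝ E x)
  have ht := (NormedSpace.exp_series_hasSum_exp' (𝕂 := ℝ) t).smul_const x
  rw [← Real.exp_eq_exp_ℝ] at ht
  refine hA.unique ?_
  simpa [hpow, smul_smul] using ht

theorem Finset.inner_sum_sum_of_orthogonal {𝕜 F ι : Type*} [RCLike 𝕜] [NormedAddCommGroup F]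
    [InnerProductSpace 𝕜 F] (s : Finset ι) (x y : ι → F)
    (h : ∀ i ∈ s, ∀ j ∈ s, i ≠ j → ⟪x i, y j⟫_𝕜 = 0) :
    ⟪∑ i ∈ s, x i, ∑ j ∈ s, y j⟫_𝕜 = ∑ i ∈ s, ⟪x i, y i⟫_𝕜 := by
  rw [sum_inner]
  refine sum_congr rfl fun i hi => ?_
  rw [inner_sum, sum_eq_single_of_mem i hi fun j hj hji => h i hi j hj hji.symm]

theorem sum_smul_mem_intrinsicInterior_convexHull {ι E : Type*} [Fintype ι]
    [NormedAddCommGroup E] [NormedSpace ℝ E] (z : ι → E) {w : ι → ℝ}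
    (hw : ∀ i, 0 < w i) (hw1 : ∑ i, w i = 1) :
    ∑ i, w i • z i ∈ intrinsicInterior ℝ (convexHull ℝ (Set.range z)) := by
  -- Recording `∑ u i` as a second coordinate makes the weights-to-points map linear, so that the
  -- open mapping theorem shows that positive weights fill a neighbourhood in the affine span.
  let T : (ι → ℝ) →ₗ[ℝ] E × ℝ :=
    (Fintype.linearCombination ℝ z).prod (Fintype.linearCombination ℝ fun _ => 1)
  have hT : ∀ u, T u = (∑ i, u i • z i, ∑ i, u i) := fun u => by
    simp [T, Fintype.linearCombination_apply]
  let U : Set (ι → ℝ) := {u | ∀ i, 0 < u i}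
  have hU : IsOpen U := by
    simp only [U, Set.ofPred_forall]
    exact isOpen_iInter_of_finite fun i => isOpen_lt continuous_const (continuous_apply i)
  have hTU : IsOpen (T.rangeRestrict '' U) :=
    T.rangeRestrict.isOpenMap_of_finiteDimensional T.surjective_rangeRestrict U hU
  have hS : ∀ y ∈ affineSpan ℝ (convexHull ℝ (Set.range z)), (y, (1 : ℝ)) ∈ LinearMap.range T := by
    intro y hy
    rw [affineSpan_convexHull] at hy
    obtain ⟨u, hu, rfl⟩ := eq_affineCombination_of_mem_affineSpan_of_fintype hy
    exact ⟨u, by rw [hT, affineCombination_eq_linear_combination _ _ _ hu, hu]⟩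
  let φ : affineSpan ℝ (convexHull ℝ (Set.range z)) → LinearMap.range T :=
    fun y => ⟨((y : E), 1), hS y y.2⟩
  have hφ : Continuous φ := by fun_prop
  have hφU : φ ⁻¹' (T.rangeRestrict '' U) ⊆ (↑) ⁻¹' convexHull ℝ (Set.range z) := by
    rintro y ⟨u, hu, hTu⟩
    have hTu : T u = ((y : E), 1) := congrArg Subtype.val hTu
    rw [hT, Prod.mk.injEq] at hTu
    rw [Set.mem_preimage, ← hTu.1]
    exact (convex_convexHull ℝ _).sum_mem (fun i _ => (hu i).le) hTu.2
      fun i _ => subset_convexHull ℝ _ (Set.mem_range_self i)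
  have hm : ∑ i, w i • z i ∈ convexHull ℝ (Set.range z) :=
    (convex_convexHull ℝ _).sum_mem (fun i _ => (hw i).le) hw1
      fun i _ => subset_convexHull ℝ _ (Set.mem_range_self i)
  have hmφ : ⟨_, mem_affineSpan ℝ hm⟩ ∈ φ ⁻¹' (T.rangeRestrict '' U) :=
    ⟨w, hw, Subtype.ext (by simp [φ, hT, hw1])⟩
  exact mem_intrinsicInterior.2 ⟨_, interior_maximal hφU (hTU.preimage hφ) hmφ, rfl⟩

theorem Finset.centerMass_mem_intrinsicInterior_convexHull {ι E : Type*} [NormedAddCommGroup E]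
    [NormedSpace ℝ E] (s : Finset ι) (z : ι → E) {w : ι → ℝ} (hw : ∀ i ∈ s, 0 < w i)
    (hs : s.Nonempty) : s.centerMass w z ∈ intrinsicInterior ℝ (convexHull ℝ (z '' s)) := by
  have hpos : 0 < ∑ i ∈ s, w i := sum_pos hw hs
  have hcm : s.centerMass w z = ∑ i : s, ((∑ j ∈ s, w j)⁻¹ * w i) • z i := by
    simp_rw [centerMass, smul_sum, smul_smul,
      sum_coe_sort s fun i => ((∑ j ∈ s, w j)⁻¹ * w i) • z i]
  have hrange : z '' s = Set.range fun i : s => z i := by ext; simp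
  rw [hcm, hrange]
  refine sum_smul_mem_intrinsicInterior_convexHull _
    (fun i => mul_pos (inv_pos.2 hpos) (hw i i.2)) ?_
  rw [← mul_sum, sum_coe_sort s w, inv_mul_cancel₀ hpos.ne']

section WeightVectors

variable {E V : Type*} [NormedAddCommGroup E] [InnerProductSpace ℝ E]
  [NormedAddCommGroup V] [InnerProductSpace ℝ V] (π : E →ₗ[ℝ] V →L[ℝ] V)

def IsWeightVector (α : E) (x : V) : Prop := ∀ X, π X x = ⟪α, X⟫_ℝ • x

variable {π}

theorem IsWeightVector.smul {α : E} {x : V} (hx : IsWeightVector π α x) (a : ℝ) :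
    IsWeightVector π α (a • x) := fun X => by rw [map_smul, hx X, smul_comm]

theorem IsWeightVector.inner_eq_zero (hsa : ∀ X v w, ⟪π X v, w⟫_ℝ = ⟪v, π X w⟫_ℝ)
    {α β : E} {x y : V} (hx : IsWeightVector π α x) (hy : IsWeightVector π β y) (hαβ : α ≠ β) :
    ⟪x, y⟫_ℝ = 0 := by
  have h := hsa (α - β) x y
  rw [hx, hy, real_inner_smul_left, real_inner_smul_right] at h
  have h' : ⟪α - β, α - β⟫_ℝ * ⟪x, y⟫_ℝ = 0 := by
    rw [inner_sub_left, sub_mul, h, sub_self]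
  exact (mul_eq_zero.1 h').resolve_left (inner_self_ne_zero.2 (sub_ne_zero.2 hαβ))

variable [FiniteDimensional ℝ E]

theorem inner_momentMap (v : V) (X : E) : ⟪momentMap π v, X⟫_ℝ = ⟪π X v, v⟫_ℝ / ‖v‖ ^ 2 := by
  simp [momentMap, InnerProductSpace.toDual_symm_apply]

theorem momentMap_sum_of_isWeightVector (hsa : ∀ X v w, ⟪π X v, w⟫_ℝ = ⟪v, π X w⟫_ℝ)
    (s : Finset E) (c : E → V) (hc : ∀ α ∈ s, IsWeightVector π α (c α)) :
    momentMap π (∑ α ∈ s, c α) = s.centerMass (fun α => ‖c α‖ ^ 2) id := by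
  have horth : ∀ a : E → ℝ, ∀ α ∈ s, ∀ β ∈ s, α ≠ β → ⟪a α • c α, c β⟫_ℝ = 0 :=
    fun a α hα β hβ hαβ => ((hc α hα).smul (a α)).inner_eq_zero hsa (hc β hβ) hαβ
  have hsum : ∀ a : E → ℝ, ⟪∑ α ∈ s, a α • c α, ∑ β ∈ s, c β⟫_ℝ = ∑ α ∈ s, a α * ‖c α‖ ^ 2 :=
    fun a => by
      rw [inner_sum_sum_of_orthogonal s _ c (horth a)]
      simp_rw [real_inner_smul_left, real_inner_self_eq_norm_sq]
  refine ext_inner_right ℝ fun X => ?_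
  have hnorm : ‖∑ α ∈ s, c α‖ ^ 2 = ∑ α ∈ s, ‖c α‖ ^ 2 := by
    simpa using hsum 1
  have hπ : ⟪π X (∑ α ∈ s, c α), ∑ α ∈ s, c α⟫_ℝ = ∑ α ∈ s, ⟪α, X⟫_ℝ * ‖c α‖ ^ 2 := by
    rw [map_sum, sum_congr rfl fun α hα => hc α hα X, hsum]
  rw [inner_momentMap, hnorm, hπ, centerMass, real_inner_smul_left, sum_inner, div_eq_inv_mul]
  simp_rw [id, real_inner_smul_left, mul_comm]

end WeightVectors

theorem momentMap_exp_eq_weighted_average_general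
    {𝔞 V : Type*} [NormedAddCommGroup 𝔞] [InnerProductSpace ℝ 𝔞] [FiniteDimensional ℝ 𝔞]
    [NormedAddCommGroup V] [InnerProductSpace ℝ V] [FiniteDimensional ℝ V]
    (π : 𝔞 →ₗ[ℝ] V →L[ℝ] V)
    (hsa : ∀ X : 𝔞, ∀ v w : V, ⟪(π X) v, w⟫_ℝ = ⟪v, (π X) w⟫_ℝ)
    (ΔV : Finset 𝔞) (v : V) (hv : v ≠ 0)
    -- `c α` is the component of `v` in the weight space `V_α`:
    (c : 𝔞 → V)
    (hc : ∀ α ∈ ΔV, ∀ X : 𝔞, (π X) (c α) = ⟪α, X⟫_ℝ • c α)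
    (hsum : v = ∑ α ∈ ΔV, c α)
    (Rv : Finset 𝔞) (hRv : Rv = ΔV.filter fun α => c α ≠ 0)
    (X : 𝔞) :
    momentMap π ((NormedSpace.exp (π X)) v) =
      (∑ α ∈ Rv, Real.exp (2 * ⟪X, α⟫_ℝ) * ‖c α‖ ^ 2)⁻¹ •
        ∑ α ∈ Rv, (Real.exp (2 * ⟪X, α⟫_ℝ) * ‖c α‖ ^ 2) • α ∧
    momentMap π ((NormedSpace.exp (π X)) v) ∈
      intrinsicInterior ℝ (convexHull ℝ (Rv : Set 𝔞)) := by
  have hmem : ∀ α ∈ Rv, α ∈ ΔV ∧ c α ≠ 0 := fun α hα => by rwa [hRv, mem_filter] at hα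
  have hvRv : v = ∑ α ∈ Rv, c α := by rw [hsum, hRv, sum_filter_ne_zero]
  have hexp : NormedSpace.exp (π X) v = ∑ α ∈ Rv, Real.exp ⟪α, X⟫_ℝ • c α := by
    rw [hvRv, map_sum]
    exact sum_congr rfl fun α hα => (π X).exp_apply_of_apply_eq_smul (hc α (hmem α hα).1 X)
  have hnorm : ∀ α, ‖Real.exp ⟪α, X⟫_ℝ • c α‖ ^ 2 = Real.exp (2 * ⟪X, α⟫_ℝ) * ‖c α‖ ^ 2 :=
    fun α => by
      rw [norm_smul, mul_pow, Real.norm_of_nonneg (Real.exp_pos _).le, ← Real.exp_nat_mul,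
        real_inner_comm]
      norm_num
  have hcm : momentMap π (NormedSpace.exp (π X) v) =
      Rv.centerMass (fun α => Real.exp (2 * ⟪X, α⟫_ℝ) * ‖c α‖ ^ 2) id := by
    rw [hexp, momentMap_sum_of_isWeightVector hsa Rv _
      fun α hα => IsWeightVector.smul (hc α (hmem α hα).1) _]
    simp_rw [hnorm]
  have hRv_nonempty : Rv.Nonempty := nonempty_of_sum_ne_zero (hvRv ▸ hv)
  refine ⟨hcm, ?_⟩
  rw [hcm, ← Set.image_id (Rv : Set 𝔞)]
  exact Rv.centerMass_mem_intrinsicInterior_convexHull id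
    (fun α hα => mul_pos (Real.exp_pos _) (pow_pos (norm_pos_iff.2 (hmem α hα).2) 2))
    hRv_nonempty

/-- the moment map along the `A`-orbit of `v` is the weighted average
`m(exp(π X)v) = (Σ_{α∈R(v)} e^{2⟪X,α⟫}‖v_α‖² α) / (Σ_{α∈R(v)} e^{2⟪X,α⟫}‖v_α‖²)`,
which lies in the intrinsic interior of the convex hull of `R(v)`. -/
theorem momentMap_exp_eq_weighted_average
    {𝔞 V : Type*} [NormedAddCommGroup 𝔞] [InnerProductSpace ℝ 𝔞] [FiniteDimensional ℝ 𝔞]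
    [NormedAddCommGroup V] [InnerProductSpace ℝ V] [FiniteDimensional ℝ V]
    (π : 𝔞 →ₗ[ℝ] V →L[ℝ] V)
    (hsa : ∀ X : 𝔞, ∀ v w : V, ⟪(π X) v, w⟫_ℝ = ⟪v, (π X) w⟫_ℝ)
    (hcomm : ∀ X Y : 𝔞, Commute (π X) (π Y))
    (ΔV : Finset 𝔞) (v : V) (hv : v ≠ 0)
    -- `c α` is the component of `v` in the weight space `V_α`:
    (c : 𝔞 → V)
    (hc : ∀ α ∈ ΔV, ∀ X : 𝔞, (π X) (c α) = ⟪α, X⟫_ℝ • c α)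
    (hsum : v = ∑ α ∈ ΔV, c α)
    (Rv : Finset 𝔞) (hRv : Rv = ΔV.filter fun α => c α ≠ 0)
    (X : 𝔞) :
    momentMap π ((NormedSpace.exp (π X)) v) =
      (∑ α ∈ Rv, Real.exp (2 * ⟪X, α⟫_ℝ) * ‖c α‖ ^ 2)⁻¹ •
        ∑ α ∈ Rv, (Real.exp (2 * ⟪X, α⟫_ℝ) * ‖c α‖ ^ 2) • α ∧
    momentMap π ((NormedSpace.exp (π X)) v) ∈
      intrinsicInterior ℝ (convexHull ℝ (Rv : Set 𝔞)) :=
  momentMap_exp_eq_weighted_average_general π hsa ΔV v hv c hc hsum Rv hRv X
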